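/- arXiv:1005.2231 — 6 statements merged into one kernel-verified Lean document; each statement's English description precedes it below -/
import Mathlib

section
/- For every traceless real diagonal 8×8 matrix D = diag(D^1,…,D^8) and every tetra-index I = (i_1 < i_2 < i_3 < i_4) in {1,…,8}, the 56×56 matrices satisfy [h_D, λ_I] = (D^{i_1} + D^{i_2} + D^{i_3} + D^{i_4})·λ_I. -/
open Matrix

/-- Index set for the 28-dimensional space `Λ²(ℝ⁸)`: ordered pairs `i < j` in `Fin 8`. -/
abbrev PairIdx : Type := {p : Fin 8 × Fin 8 // p.1 < p.2}

/-- Index set for the 56-dimensional space `W = Λ²V ⊕ Λ²(V*)`. -/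
abbrev WIdx : Type := PairIdx ⊕ PairIdx

/-- The action of an `8×8` matrix `M` on `Λ²V`, `M(eᵢ ∧ eⱼ) = (M eᵢ) ∧ eⱼ + eᵢ ∧ (M eⱼ)`,
written as a `28×28` matrix in the basis `{e_{ij}}_{i<j}`. -/
def lam2 (M : Matrix (Fin 8) (Fin 8) ℝ) : Matrix PairIdx PairIdx ℝ :=
  Matrix.of fun a b =>
    M a.1.1 b.1.1 * (if a.1.2 = b.1.2 then 1 else 0)
    - M a.1.2 b.1.1 * (if a.1.1 = b.1.2 then 1 else 0)
    + M a.1.2 b.1.2 * (if a.1.1 = b.1.1 then 1 else 0)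
    - M a.1.1 b.1.2 * (if a.1.2 = b.1.1 then 1 else 0)

/-- The `56×56` extension of an `8×8` matrix `M` to `W = Λ²V ⊕ Λ²(V*)`:
it acts on `Λ²V` as `lam2 M` and on `Λ²(V*)` by minus the transpose of this action. -/
def extW (M : Matrix (Fin 8) (Fin 8) ℝ) : Matrix WIdx WIdx ℝ :=
  Matrix.fromBlocks (lam2 M) 0 0 (-(lam2 M)ᵀ)

/-- The antisymmetric `8×8` matrix `A_{kl} eᵢ = δ_{li} e_k − δ_{ki} e_l`. -/
def Amat (k l : Fin 8) : Matrix (Fin 8) (Fin 8) ℝ :=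
  Matrix.of fun a b => (if a = k ∧ b = l then 1 else 0) - (if a = l ∧ b = k then 1 else 0)

/-- The symmetric `8×8` matrix `S_{kl} eᵢ = δ_{li} e_k + δ_{ki} e_l`. -/
def Smat (k l : Fin 8) : Matrix (Fin 8) (Fin 8) ℝ :=
  Matrix.of fun a b => (if a = k ∧ b = l then 1 else 0) + (if a = l ∧ b = k then 1 else 0)

/-- `J⁺_{kl} = (S_{kl} + A_{kl})/√2` as a `56×56` matrix. -/
noncomputable def Jplus (k l : Fin 8) : Matrix WIdx WIdx ℝ :=
  (Real.sqrt 2)⁻¹ • (extW (Smat k l) + extW (Amat k l))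

/-- `J⁻_{kl} = (S_{kl} − A_{kl})/√2` as a `56×56` matrix. -/
noncomputable def Jminus (k l : Fin 8) : Matrix WIdx WIdx ℝ :=
  (Real.sqrt 2)⁻¹ • (extW (Smat k l) - extW (Amat k l))

/-- `h_D` for a diagonal matrix `D = diag d`: acts by `(dᵢ + dⱼ)` on `e_{ij}` and
`−(dᵢ + dⱼ)` on `ε^{ij}`. -/
def hD (d : Fin 8 → ℝ) : Matrix WIdx WIdx ℝ := extW (Matrix.diagonal d)

/-- Tetra-indices: strictly increasing 4-tuples in `{1,…,8}`. -/
abbrev TetraIdx : Type := {f : Fin 4 → Fin 8 // StrictMono f}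

/-- The 8-index Levi-Civita symbol. -/
noncomputable def levi (f : Fin 8 → Fin 8) : ℝ :=
  if h : Function.Bijective f then ((Equiv.Perm.sign (Equiv.ofBijective f h) : ℤ) : ℝ) else 0

/-- The rank-4 generalized Kronecker delta `δ^{j₁j₂j₃j₄}_{i₁i₂i₃i₄}`. -/
noncomputable def gdelta (i j : Fin 4 → Fin 8) : ℝ :=
  ∑ σ : Equiv.Perm (Fin 4),
    ((Equiv.Perm.sign σ : ℤ) : ℝ) * ∏ t : Fin 4, (if j t = i (σ t) then 1 else 0)

/-- `ε_{i₁i₂i₃i₄ a₁a₂ b₁b₂}` for a tetra-index `I` and pair indices `a`, `b`. -/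
noncomputable def leviI (I : TetraIdx) (a b : PairIdx) : ℝ :=
  levi ![I.val 0, I.val 1, I.val 2, I.val 3, a.1.1, a.1.2, b.1.1, b.1.2]

/-- `δ^{a₁ a₂ b₁ b₂}_{i₁i₂i₃i₄}` for a tetra-index `I` and pair indices `a`, `b`. -/
noncomputable def gdeltaI (I : TetraIdx) (a b : PairIdx) : ℝ :=
  gdelta I.val ![a.1.1, a.1.2, b.1.1, b.1.2]

/-- The `56×56` matrix `λ_I`: block off-diagonal w.r.t. `W = Λ²V ⊕ Λ²(V*)`, with
`λ_I(e_{j₁j₂}) = ∑_{k₁<k₂} ε_{I j₁j₂k₁k₂} ε^{k₁k₂}` and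
`λ_I(ε^{j₁j₂}) = ∑_{k₁<k₂} δ^{j₁j₂k₁k₂}_I e_{k₁k₂}`. -/
noncomputable def lamT (I : TetraIdx) : Matrix WIdx WIdx ℝ :=
  Matrix.fromBlocks 0 (Matrix.of fun K J => gdeltaI I J K) (Matrix.of fun K J => leviI I J K) 0

/-- The symplectic metric `Ω`. -/
def OmegaW : Matrix WIdx WIdx ℝ :=
  Matrix.fromBlocks 0 (-1) 1 0

/-- The pair index `(1,2)` (i.e. `(0,1)` in 0-based indexing). -/
def pair01 : PairIdx := ⟨(0, 1), by decide⟩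

lemma lam2_diagonal (d : Fin 8 → ℝ) :
    lam2 (Matrix.diagonal d) = Matrix.diagonal (fun a : PairIdx => d a.1.1 + d a.1.2) := by
  ext a b
  obtain ⟨⟨a1,a2⟩,ha⟩ := a; obtain ⟨⟨b1,b2⟩,hb⟩ := b
  simp only at ha hb
  simp only [lam2, Matrix.of_apply, Matrix.diagonal_apply, Subtype.mk.injEq, Prod.mk.injEq]
  split_ifs
  all_goals try ring
  all_goals exfalso
  all_goals omega

lemma gdelta_support (i j : Fin 4 → Fin 8) (h : gdelta i j ≠ 0) (d : Fin 8 → ℝ) :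
    ∑ t, d (j t) = ∑ t, d (i t) := by
  obtain ⟨σ, -, hσ⟩ := Finset.exists_ne_zero_of_sum_ne_zero h
  have hne : ∏ t : Fin 4, (if j t = i (σ t) then (1:ℝ) else 0) ≠ 0 := by
    intro h0; rw [h0, mul_zero] at hσ; exact hσ rfl
  have hall : ∀ t : Fin 4, j t = i (σ t) := by
    intro t
    by_contra hc
    exact hne (Finset.prod_eq_zero (Finset.mem_univ t) (if_neg hc))
  calc ∑ t, d (j t) = ∑ t, d (i (σ t)) := by simp only [hall]
    _ = ∑ t, d (i t) := Equiv.sum_comp σ (fun t => d (i t))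

lemma levi_support (f : Fin 8 → Fin 8) (h : levi f ≠ 0) (d : Fin 8 → ℝ) :
    ∑ t, d (f t) = ∑ t, d t := by
  have hb : Function.Bijective f := by
    by_contra hc
    exact h (dif_neg hc)
  exact Function.Bijective.sum_comp hb d

/-- For every traceless real diagonal `8×8` matrix `D` and every
tetra-index `I = (i₁ < i₂ < i₃ < i₄)`, `[h_D, λ_I] = (D^{i₁}+D^{i₂}+D^{i₃}+D^{i₄})·λ_I`. -/
theorem commutator_hD_lamT (d : Fin 8 → ℝ) (htr : ∑ i, d i = 0) (I : TetraIdx) :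
    hD d * lamT I - lamT I * hD d = (∑ t : Fin 4, d (I.val t)) • lamT I := by
  ext x y
  rw [Matrix.sub_apply, Matrix.smul_apply, Matrix.mul_apply, Matrix.mul_apply,
    Fintype.sum_sum_type, Fintype.sum_sum_type]
  obtain x | x := x <;> obtain y | y := y <;>
    simp only [hD, extW, lam2_diagonal, lamT, Matrix.fromBlocks_apply₁₁,
      Matrix.fromBlocks_apply₁₂, Matrix.fromBlocks_apply₂₁, Matrix.fromBlocks_apply₂₂,
      Matrix.zero_apply, Matrix.neg_apply, Matrix.transpose_apply, Matrix.diagonal_apply,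
      Matrix.of_apply, smul_eq_mul, mul_zero, zero_mul, neg_mul, mul_neg, neg_zero,
      mul_ite, ite_mul, mul_one, Finset.sum_const_zero, add_zero, zero_add, zero_sub,
      sub_zero, Finset.sum_neg_distrib, Finset.sum_ite_eq, Finset.sum_ite_eq',
      Finset.mem_univ, if_true, sub_self, neg_neg, sub_neg_eq_add]
  · by_cases hB : gdeltaI I y x = 0
    · simp [hB]
    · have hs := gdelta_support I.val ![y.1.1, y.1.2, x.1.1, x.1.2]
        (by simpa [gdeltaI] using hB) d
      simp only [Fin.sum_univ_four, Matrix.cons_val_zero, Matrix.cons_val_one,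
        Matrix.head_cons, Matrix.cons_val_two, Matrix.tail_cons, Matrix.cons_val_three] at hs
      rw [Fin.sum_univ_four]
      linear_combination gdeltaI I y x * hs
  · by_cases hC : leviI I y x = 0
    · simp [hC]
    · have hs := levi_support ![I.val 0, I.val 1, I.val 2, I.val 3, y.1.1, y.1.2, x.1.1, x.1.2]
        (by simpa [leviI] using hC) d
      rw [htr] at hs
      have e5 : (![I.val 0, I.val 1, I.val 2, I.val 3, y.1.1, y.1.2, x.1.1, x.1.2] :
          Fin 8 → Fin 8) 5 = y.1.2 := rfl
      have e6 : (![I.val 0, I.val 1, I.val 2, I.val 3, y.1.1, y.1.2, x.1.1, x.1.2] :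
          Fin 8 → Fin 8) 6 = x.1.1 := rfl
      have e7 : (![I.val 0, I.val 1, I.val 2, I.val 3, y.1.1, y.1.2, x.1.1, x.1.2] :
          Fin 8 → Fin 8) 7 = x.1.2 := rfl
      simp only [Fin.sum_univ_eight, Matrix.cons_val_zero, Matrix.cons_val_one,
        Matrix.head_cons, Matrix.cons_val_two, Matrix.tail_cons, Matrix.cons_val_three,
        Matrix.cons_val_four, Matrix.cons_val_succ, e5, e6, e7] at hs
      rw [Fin.sum_univ_four]
      linear_combination (-(leviI I y x)) * hs
end

section
/- For every tetra-index I = (i_1 < i_2 < i_3 < i_4) in {1,…,8}, the 56×56 matrix λ_I is nilpotent of order two: (λ_I)² = 0. In particular (𝒥⁺_I)² = 0 for all I ∈ I_8 (tetra-indices with i_4 = 8), where 𝒥⁺_I ≡ λ_I. -/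
open Matrix

lemma levi_eq_zero_of_not_inj {f : Fin 8 → Fin 8} (h : ¬ Function.Injective f) :
    levi f = 0 := by
  have hb : ¬ Function.Bijective f := fun hb => h hb.injective
  unfold levi
  rw [dif_neg hb]

lemma gdelta_range {i j : Fin 4 → Fin 8} (h : gdelta i j ≠ 0) (t : Fin 4) :
    ∃ s, j t = i s := by
  by_contra hc
  push_neg at hc
  apply h
  unfold gdelta
  apply Finset.sum_eq_zero
  intro σ _
  have hz : (∏ t' : Fin 4, (if j t' = i (σ t') then (1:ℝ) else 0)) = 0 := by
    apply Finset.prod_eq_zero (Finset.mem_univ t)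
    simp [hc (σ t)]
  simp [hz]

/-- For every tetra-index `I = (i₁ < i₂ < i₃ < i₄)`, the `56×56` matrix
`λ_I` is nilpotent of order two: `(λ_I)² = 0`. In particular `(𝒥⁺_I)² = 0` for all
`I ∈ I₈` (tetra-indices with `i₄ = 8`), where `𝒥⁺_I ≡ λ_I`. -/
theorem lamT_sq_eq_zero :
    (∀ I : TetraIdx, lamT I * lamT I = 0) ∧
    (∀ I : TetraIdx, I.val 3 = 7 → lamT I * lamT I = 0) := by
  have main : ∀ I : TetraIdx, lamT I * lamT I = 0 := by
    intro I
    unfold lamT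
    rw [Matrix.fromBlocks_multiply]
    have hBC : (Matrix.of fun K J => gdeltaI I J K) * (Matrix.of fun K J => leviI I J K)
        = (0 : Matrix PairIdx PairIdx ℝ) := by
      ext a b
      rw [Matrix.mul_apply]
      apply Finset.sum_eq_zero
      intro K _
      simp only [Matrix.of_apply, Matrix.zero_apply]
      rcases eq_or_ne (gdeltaI I K a) 0 with h | h
      · rw [h, zero_mul]
      · have hr := gdelta_range (i := I.val)
          (j := ![K.1.1, K.1.2, a.1.1, a.1.2]) h 0
        obtain ⟨s, hs⟩ := hr
        simp only [Matrix.cons_val_zero] at hs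
        have hlev : leviI I b K = 0 := by
          apply levi_eq_zero_of_not_inj
          intro hinj
          set f : Fin 8 → Fin 8 :=
            ![I.val 0, I.val 1, I.val 2, I.val 3, b.1.1, b.1.2, K.1.1, K.1.2] with hf
          fin_cases s <;>
          · first
            | exact absurd (hinj (show f 6 = f 0 from hs)) (by decide)
            | exact absurd (hinj (show f 6 = f 1 from hs)) (by decide)
            | exact absurd (hinj (show f 6 = f 2 from hs)) (by decide)
            | exact absurd (hinj (show f 6 = f 3 from hs)) (by decide)
        rw [hlev, mul_zero]
    have hCB : (Matrix.of fun K J => leviI I J K) * (Matrix.of fun K J => gdeltaI I J K)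
        = (0 : Matrix PairIdx PairIdx ℝ) := by
      ext a b
      rw [Matrix.mul_apply]
      apply Finset.sum_eq_zero
      intro K _
      simp only [Matrix.of_apply, Matrix.zero_apply]
      rcases eq_or_ne (gdeltaI I b K) 0 with h | h
      · rw [h, mul_zero]
      · have hr := gdelta_range (i := I.val)
          (j := ![b.1.1, b.1.2, K.1.1, K.1.2]) h 2
        obtain ⟨s, hs⟩ := hr
        simp only [Matrix.cons_val_two, Matrix.tail_cons, Matrix.head_cons] at hs
        have hlev : leviI I K a = 0 := by
          apply levi_eq_zero_of_not_inj
          intro hinj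
          set f : Fin 8 → Fin 8 :=
            ![I.val 0, I.val 1, I.val 2, I.val 3, K.1.1, K.1.2, a.1.1, a.1.2] with hf
          fin_cases s <;>
          · first
            | exact absurd (hinj (show f 4 = f 0 from hs)) (by decide)
            | exact absurd (hinj (show f 4 = f 1 from hs)) (by decide)
            | exact absurd (hinj (show f 4 = f 2 from hs)) (by decide)
            | exact absurd (hinj (show f 4 = f 3 from hs)) (by decide)
        rw [hlev, zero_mul]
    simp [hBC, hCB]
  exact ⟨main, fun I _ => main I⟩
end

section
/- Each of the following 56×56 real matrices M satisfies the infinitesimal symplectic condition Mᵀ Ω + Ω M = 0, where Ω = [[0, −I_28],[I_28, 0]]: (i) h_D for every traceless real diagonal 8×8 matrix D; (ii) the 56×56 extension of A_{kl} for every k < l; (iii) the 56×56 extension of S_{kl} for every k < l; (iv) λ_I for every tetra-index I. Equivalently, each such matrix has the block form [[A, B],[C, −Aᵀ]] with B and C symmetric 28×28 matrices, and hence lies in 𝔰𝔭(56, ℝ). -/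
open Matrix

/-!
A matrix `[[A, B], [C, D]]` is infinitesimally symplectic for `Ω = [[0, -1], [1, 0]]` as soon as
`D = -Aᵀ` and `B`, `C` are symmetric. The extensions `extW M` have this shape with `B = C = 0`,
which covers (i)–(iii). For `λ_I` the diagonal blocks vanish, and the off-diagonal blocks are
symmetric because exchanging the last two index pairs of `ε_{I a b}` or of `δ^{a b}_I` is an even
permutation (a product of two transpositions).
-/

theorem Matrix.fromBlocks_transpose_mul_J_add_J_mul_eq_zero {R l : Type*} [CommRing R]
    [Fintype l] [DecidableEq l] {A B C D : Matrix l l R}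
    (hB : Bᵀ = B) (hC : Cᵀ = C) (hD : D = -Aᵀ) :
    (fromBlocks A B C D)ᵀ * J l R + J l R * fromBlocks A B C D = 0 := by
  subst hD
  simp [J, fromBlocks_transpose, fromBlocks_multiply, fromBlocks_add, hB, hC]

theorem extW_transpose_mul_omegaW_add_omegaW_mul_eq_zero (M : Matrix (Fin 8) (Fin 8) ℝ) :
    (extW M)ᵀ * OmegaW + OmegaW * extW M = 0 :=
  fromBlocks_transpose_mul_J_add_J_mul_eq_zero transpose_zero transpose_zero rfl

theorem Equiv.Perm.sign_swap_mul_swap {α : Type*} [DecidableEq α] [Fintype α] {a b c d : α}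
    (hab : a ≠ b) (hcd : c ≠ d) : sign (swap a b * swap c d) = 1 := by
  rw [sign_mul, sign_swap hab, sign_swap hcd]
  rfl

theorem levi_comp (f : Fin 8 → Fin 8) (σ : Equiv.Perm (Fin 8)) :
    levi (f ∘ σ) = Equiv.Perm.sign σ * levi f := by
  by_cases hf : Function.Bijective f
  · have hfσ : Function.Bijective (f ∘ σ) := hf.comp σ.bijective
    have hof : Equiv.ofBijective (f ∘ σ) hfσ = Equiv.ofBijective f hf * σ :=
      Equiv.ext fun _ => rfl
    rw [levi, levi, dif_pos hf, dif_pos hfσ, hof, Equiv.Perm.sign_mul]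
    push_cast
    ring
  · have hfσ : ¬ Function.Bijective (f ∘ σ) := (σ.bijective_comp f).not.mpr hf
    rw [levi, levi, dif_neg hf, dif_neg hfσ, mul_zero]

theorem gdelta_comp (i j : Fin 4 → Fin 8) (σ : Equiv.Perm (Fin 4)) :
    gdelta i (j ∘ σ) = Equiv.Perm.sign σ * gdelta i j := by
  rw [gdelta, gdelta, Finset.mul_sum, ← Equiv.sum_comp (Equiv.mulRight σ)]
  refine Finset.sum_congr rfl fun τ _ => ?_
  have hprod : ∏ t, (if (j ∘ σ) t = i ((τ * σ) t) then (1 : ℝ) else 0)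
      = ∏ t, (if j t = i (τ t) then (1 : ℝ) else 0) :=
    Equiv.prod_comp σ fun t => if j t = i (τ t) then (1 : ℝ) else 0
  rw [Equiv.coe_mulRight, hprod, Equiv.Perm.sign_mul]
  push_cast
  ring

theorem leviI_comm (I : TetraIdx) (a b : PairIdx) : leviI I a b = leviI I b a := by
  have hswap : ![I.val 0, I.val 1, I.val 2, I.val 3, a.1.1, a.1.2, b.1.1, b.1.2] ∘
      (Equiv.swap 4 6 * Equiv.swap 5 7 : Equiv.Perm (Fin 8))
      = ![I.val 0, I.val 1, I.val 2, I.val 3, b.1.1, b.1.2, a.1.1, a.1.2] := by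
    funext t; fin_cases t <;> rfl
  unfold leviI
  rw [← hswap, levi_comp, Equiv.Perm.sign_swap_mul_swap (by decide) (by decide)]
  simp

theorem gdeltaI_comm (I : TetraIdx) (a b : PairIdx) : gdeltaI I a b = gdeltaI I b a := by
  have hswap : ![a.1.1, a.1.2, b.1.1, b.1.2] ∘
      (Equiv.swap 0 2 * Equiv.swap 1 3 : Equiv.Perm (Fin 4))
      = ![b.1.1, b.1.2, a.1.1, a.1.2] := by
    funext t; fin_cases t <;> rfl
  unfold gdeltaI
  rw [← hswap, gdelta_comp, Equiv.Perm.sign_swap_mul_swap (by decide) (by decide)]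
  simp

theorem lamT_transpose_mul_omegaW_add_omegaW_mul_eq_zero (I : TetraIdx) :
    (lamT I)ᵀ * OmegaW + OmegaW * lamT I = 0 :=
  fromBlocks_transpose_mul_J_add_J_mul_eq_zero
    (ext fun a b => gdeltaI_comm I a b) (ext fun a b => leviI_comm I a b) (by simp)

/-- Each of the following `56×56` matrices `M` satisfies the
infinitesimal symplectic condition `Mᵀ Ω + Ω M = 0` with `Ω = [[0, −I₂₈],[I₂₈, 0]]`:
(i) `h_D` for every traceless real diagonal `D`; (ii) the extension of `A_{kl}` for `k < l`;
(iii) the extension of `S_{kl}` for `k < l`; (iv) `λ_I` for every tetra-index `I`.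
Hence all of them lie in `𝔰𝔭(56, ℝ)`. -/
theorem generators_infinitesimally_symplectic :
    (∀ d : Fin 8 → ℝ, (∑ i, d i = 0) → (hD d)ᵀ * OmegaW + OmegaW * hD d = 0) ∧
    (∀ k l : Fin 8, k < l → (extW (Amat k l))ᵀ * OmegaW + OmegaW * extW (Amat k l) = 0) ∧
    (∀ k l : Fin 8, k < l → (extW (Smat k l))ᵀ * OmegaW + OmegaW * extW (Smat k l) = 0) ∧
    (∀ I : TetraIdx, (lamT I)ᵀ * OmegaW + OmegaW * lamT I = 0) :=
  ⟨fun d _ => extW_transpose_mul_omegaW_add_omegaW_mul_eq_zero (diagonal d),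
    fun k l _ => extW_transpose_mul_omegaW_add_omegaW_mul_eq_zero (Amat k l),
    fun k l _ => extW_transpose_mul_omegaW_add_omegaW_mul_eq_zero (Smat k l),
    lamT_transpose_mul_omegaW_add_omegaW_mul_eq_zero⟩
end

section
/- Consider real electric and magnetic charges q_{mn}, p^{mn} (1 ≤ m < n ≤ 8) of the skew-diagonal Ansatz form q_{12} = √2·r·cos(φ/4), p^{12} = √2·r·sin(φ/4), and q_{mn} = p^{mn} = 0 for (m,n) ≠ (1,2), with r, φ real. Then the attractor equations II and III hold identically for all values of r and φ: (II) Σ_{m<n, r<s} (J⁺_{kl} + (J⁺_{kl})ᵀ)^{(mn)(rs)} q_{mn} p^{rs} = 0 for all 1 ≤ k < l ≤ 8, where (J⁺_{kl})^{(mn)(rs)} denotes the entries of the upper 28×28 block of J⁺_{kl}; and (III) Σ_{m<n, r<s} (ε_{I m n r s} + δ^{m n r s}_{I})(q_{mn} q_{rs} − p^{mn} p^{rs}) = 0 for all tetra-indices I ∈ I_8. -/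
open Matrix

/-- For charges of the skew-diagonal Ansatz form
`q₁₂ = √2·r·cos(φ/4)`, `p¹² = √2·r·sin(φ/4)`, all other charges zero, the attractor
equations II and III hold identically for all values of `r` and `φ`:
(II) `Σ (J⁺_{kl} + (J⁺_{kl})ᵀ)^{(mn)(rs)} q_{mn} p^{rs} = 0` for all `k < l`
(entries of the upper `28×28` block of `J⁺_{kl}`), and
(III) `Σ (ε_{Imnrs} + δ^{mnrs}_I)(q_{mn} q_{rs} − p^{mn} p^{rs}) = 0` for all `I ∈ I₈`. -/
theorem attractor_eqs_II_III_hold (r φ : ℝ) (q p : PairIdx → ℝ)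
    (hq12 : q pair01 = Real.sqrt 2 * r * Real.cos (φ / 4))
    (hp12 : p pair01 = Real.sqrt 2 * r * Real.sin (φ / 4))
    (hq0 : ∀ a : PairIdx, a ≠ pair01 → q a = 0)
    (hp0 : ∀ a : PairIdx, a ≠ pair01 → p a = 0) :
    (∀ k l : Fin 8, k < l →
      ∑ a : PairIdx, ∑ b : PairIdx,
        (Jplus k l (Sum.inl a) (Sum.inl b) + Jplus k l (Sum.inl b) (Sum.inl a))
          * q a * p b = 0) ∧
    (∀ I : TetraIdx, I.val 3 = 7 →
      ∑ a : PairIdx, ∑ b : PairIdx,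
        (leviI I a b + gdeltaI I a b) * (q a * q b - p a * p b) = 0) := by
  constructor
  · intro k l hkl
    have hkl' : k ≠ l := ne_of_lt hkl
    have hJ : Jplus k l (Sum.inl pair01) (Sum.inl pair01) = 0 := by
      have h1 : ¬((0:Fin 8) = k ∧ (0:Fin 8) = l) := by
        rintro ⟨h, h'⟩; exact hkl' (h ▸ h')
      have h2 : ¬((0:Fin 8) = l ∧ (0:Fin 8) = k) := by
        rintro ⟨h, h'⟩; exact hkl' (h' ▸ h)
      have h3 : ¬((1:Fin 8) = k ∧ (1:Fin 8) = l) := by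
        rintro ⟨h, h'⟩; exact hkl' (h ▸ h')
      have h4 : ¬((1:Fin 8) = l ∧ (1:Fin 8) = k) := by
        rintro ⟨h, h'⟩; exact hkl' (h' ▸ h)
      simp [Jplus, extW, lam2, Smat, Amat, pair01, Matrix.fromBlocks, h1, h2, h3, h4]
    rw [Finset.sum_eq_single pair01]
    · rw [Finset.sum_eq_single pair01]
      · rw [hJ]; ring
      · intro b _ hb; rw [hp0 b hb]; ring
      · intro h; exact absurd (Finset.mem_univ _) h
    · intro a _ ha
      apply Finset.sum_eq_zero
      intro b _
      rw [hq0 a ha]; ring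
    · intro h; exact absurd (Finset.mem_univ _) h
  · intro I _
    have hinj : Function.Injective I.val := I.prop.injective
    have hlev : leviI I pair01 pair01 = 0 := by
      unfold leviI levi
      rw [dif_neg]
      rintro ⟨hf, -⟩
      have : ![I.val 0, I.val 1, I.val 2, I.val 3, pair01.1.1, pair01.1.2, pair01.1.1, pair01.1.2] 4
           = ![I.val 0, I.val 1, I.val 2, I.val 3, pair01.1.1, pair01.1.2, pair01.1.1, pair01.1.2] 6 := rfl
      exact absurd (hf this) (by decide)
    have hgd : gdeltaI I pair01 pair01 = 0 := by
      unfold gdeltaI gdelta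
      apply Finset.sum_eq_zero
      intro σ _
      have hprod : (∏ t : Fin 4, (if (![pair01.1.1, pair01.1.2, pair01.1.1, pair01.1.2] : Fin 4 → Fin 8) t = I.val (σ t) then (1:ℝ) else 0)) = 0 := by
        rw [Fin.prod_univ_four]
        by_cases h0 : pair01.1.1 = I.val (σ 0)
        · by_cases h2 : pair01.1.1 = I.val (σ 2)
          · exfalso
            have he : I.val (σ 0) = I.val (σ 2) := h0.symm.trans h2
            have := σ.injective (hinj he)
            exact absurd this (by decide)
          · simp [h2]
        · simp [h0]
      rw [hprod]; ring
    rw [Finset.sum_eq_single pair01]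
    · rw [Finset.sum_eq_single pair01]
      · rw [hlev, hgd]; ring
      · intro b _ hb; rw [hp0 b hb, hq0 b hb]; ring
      · intro h; exact absurd (Finset.mem_univ _) h
    · intro a _ ha
      apply Finset.sum_eq_zero
      intro b _
      rw [hq0 a ha, hp0 a ha]; ring
    · intro h; exact absurd (Finset.mem_univ _) h
end

section
/- Let D_1,…,D_7 be a basis of the traceless real diagonal 8×8 matrices, and consider charges of the Ansatz form q_{12} = √2·r·cos(φ/4), p^{12} = √2·r·sin(φ/4), all other q_{mn}, p^{mn} zero, with r ≠ 0. Then attractor equation I, namely Σ_{m<n} (D_α^m + D_α^n) q_{mn} p^{mn} = 0 for all α = 1,…,7, is equivalent to the conditions (D_α^1 + D_α^2)·sin(φ/2) = 0 for all α, and hence (since some D_α^1 + D_α^2 ≠ 0) is equivalent to sin(φ/2) = 0, i.e. to φ = 2nπ for some n ∈ ℤ. Consequently every solution is non-dyonic: either purely electric (p^{12} = 0, when n is even) or purely magnetic (q_{12} = 0, when n is odd). -/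
open Matrix

/-!
Only the `(1,2)` term of the sum survives, and by `2 sin(φ/4) cos(φ/4) = sin(φ/2)` it equals
`r² (D_α¹ + D_α²) sin(φ/2)`. Seven independent traceless `D_α` span the whole traceless
hyperplane, which contains `diag(1,0,-1,0,…,0)`, so the functional `d ↦ d¹ + d²` cannot vanish on
all of them.
-/

section

variable {K ι : Type*} [Field K] [Fintype ι] {n : ℕ}

theorem span_range_eq_ker_sum_proj (D : Fin n → ι → K) (hsum : ∀ α, ∑ i, D α i = 0)
    (hind : LinearIndependent K D) (hcard : Fintype.card ι = n + 1) :
    Submodule.span K (Set.range D) =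
      LinearMap.ker (∑ i, LinearMap.proj i : (ι → K) →ₗ[K] K) := by
  classical
  have hle : Submodule.span K (Set.range D) ≤ LinearMap.ker (∑ i, LinearMap.proj i) := by
    rw [Submodule.span_le]
    rintro _ ⟨α, rfl⟩
    simpa using hsum α
  refine Submodule.eq_of_le_of_finrank_le hle ?_
  rw [finrank_span_eq_card hind, Fintype.card_fin, ← Nat.lt_add_one_iff, ← hcard,
    ← Module.finrank_fintype_fun_eq_card (R := K)]
  refine Submodule.finrank_lt fun hker => ?_
  obtain ⟨i⟩ : Nonempty ι := Fintype.card_pos_iff.mp (by omega)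
  have := hker ▸ Submodule.mem_top (x := Pi.single i (1 : K))
  simp at this

theorem exists_apply_add_apply_ne_zero [DecidableEq ι] (D : Fin n → ι → K)
    (hsum : ∀ α, ∑ i, D α i = 0) (hind : LinearIndependent K D)
    (hcard : Fintype.card ι = n + 1) {i j k : ι} (hij : i ≠ j) (hki : k ≠ i) (hkj : k ≠ j) :
    ∃ α, D α i + D α j ≠ 0 := by
  by_contra! h
  have hle : Submodule.span K (Set.range D) ≤
      LinearMap.ker ((LinearMap.proj i : (ι → K) →ₗ[K] K) + LinearMap.proj j) := by
    rw [Submodule.span_le]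
    rintro _ ⟨α, rfl⟩
    simpa using h α
  have hv : Pi.single i 1 - Pi.single k 1 ∈ Submodule.span K (Set.range D) := by
    rw [span_range_eq_ker_sum_proj D hsum hind hcard]
    simp
  simpa [hij, hij.symm, hki.symm, hkj.symm] using hle hv

end

namespace Real

theorem sin_div_two_eq_two_mul_sin_div_four_mul_cos_div_four (φ : ℝ) :
    sin (φ / 2) = 2 * sin (φ / 4) * cos (φ / 4) := by
  rw [← sin_two_mul]
  ring_nf

theorem sin_div_two_eq_zero_iff {φ : ℝ} : sin (φ / 2) = 0 ↔ ∃ n : ℤ, φ = 2 * n * π := by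
  rw [sin_eq_zero_iff]
  exact exists_congr fun n => by constructor <;> intro h <;> linarith

theorem sqrt_two_mul_cos_div_four_mul_sqrt_two_mul_sin_div_four (r φ : ℝ) :
    √2 * r * cos (φ / 4) * (√2 * r * sin (φ / 4)) = r ^ 2 * sin (φ / 2) := by
  rw [sin_div_two_eq_two_mul_sin_div_four_mul_cos_div_four]
  linear_combination r ^ 2 * sin (φ / 4) * cos (φ / 4) * sq_sqrt (zero_le_two : (0 : ℝ) ≤ 2)

end Real

theorem attractor_eq_I_nondyonic_general (D : Fin 7 → Fin 8 → ℝ)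
    (htr : ∀ α, ∑ i, D α i = 0) (hind : LinearIndependent ℝ D)
    (r φ : ℝ) (hr : r ≠ 0) (q p : PairIdx → ℝ)
    (hq12 : q pair01 = Real.sqrt 2 * r * Real.cos (φ / 4))
    (hp12 : p pair01 = Real.sqrt 2 * r * Real.sin (φ / 4))
    (hq0 : ∀ a : PairIdx, a ≠ pair01 → q a = 0) :
    ((∀ α : Fin 7, ∑ a : PairIdx, (D α a.1.1 + D α a.1.2) * q a * p a = 0) ↔
      (∀ α : Fin 7, (D α 0 + D α 1) * Real.sin (φ / 2) = 0)) ∧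
    ((∀ α : Fin 7, (D α 0 + D α 1) * Real.sin (φ / 2) = 0) ↔ Real.sin (φ / 2) = 0) ∧
    (Real.sin (φ / 2) = 0 ↔ ∃ n : ℤ, φ = 2 * n * Real.pi) ∧
    ((∀ α : Fin 7, ∑ a : PairIdx, (D α a.1.1 + D α a.1.2) * q a * p a = 0) →
      p pair01 = 0 ∨ q pair01 = 0) := by
  have hsum (α : Fin 7) : ∑ a : PairIdx, (D α a.1.1 + D α a.1.2) * q a * p a =
      r ^ 2 * ((D α 0 + D α 1) * Real.sin (φ / 2)) := by
    rw [Fintype.sum_eq_single pair01 fun a ha => by rw [hq0 a ha, mul_zero, zero_mul],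
      mul_assoc, hq12, hp12, Real.sqrt_two_mul_cos_div_four_mul_sqrt_two_mul_sin_div_four]
    simp only [pair01]
    ring
  have eqI_iff : (∀ α : Fin 7, ∑ a : PairIdx, (D α a.1.1 + D α a.1.2) * q a * p a = 0) ↔
      ∀ α : Fin 7, (D α 0 + D α 1) * Real.sin (φ / 2) = 0 :=
    forall_congr' fun α => by rw [hsum α, mul_eq_zero, or_iff_right (pow_ne_zero 2 hr)]
  obtain ⟨α₀, hα₀⟩ := exists_apply_add_apply_ne_zero D htr hind (by simp)
    (i := 0) (j := 1) (k := 2) (by decide) (by decide) (by decide)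
  have hsin_iff : (∀ α : Fin 7, (D α 0 + D α 1) * Real.sin (φ / 2) = 0) ↔
      Real.sin (φ / 2) = 0 :=
    ⟨fun h => (mul_eq_zero.mp (h α₀)).resolve_left hα₀, fun hs α => by rw [hs, mul_zero]⟩
  refine ⟨eqI_iff, hsin_iff, Real.sin_div_two_eq_zero_iff, fun h => ?_⟩
  have hs := hsin_iff.mp (eqI_iff.mp h)
  rw [Real.sin_div_two_eq_two_mul_sin_div_four_mul_cos_div_four, mul_eq_zero, mul_eq_zero] at hs
  rw [hp12, hq12]
  rcases hs with (h2 | hsin) | hcos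
  · norm_num at h2
  · exact Or.inl (by rw [hsin, mul_zero])
  · exact Or.inr (by rw [hcos, mul_zero])

/-- For a basis `D₁,…,D₇` of the traceless real diagonal `8×8` matrices
and charges of the Ansatz form `q₁₂ = √2·r·cos(φ/4)`, `p¹² = √2·r·sin(φ/4)`, all other
charges zero, with `r ≠ 0`: attractor equation I,
`Σ_{m<n} (D_α^m + D_α^n) q_{mn} p^{mn} = 0` for all `α`, is equivalent to
`(D_α¹ + D_α²)·sin(φ/2) = 0` for all `α`, and hence equivalent to `sin(φ/2) = 0`, i.e. to
`φ = 2nπ` for some `n ∈ ℤ`. Consequently every solution is non-dyonic: purely electric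
(`p¹² = 0`) or purely magnetic (`q¹² = 0`). -/
theorem attractor_eq_I_nondyonic (D : Fin 7 → Fin 8 → ℝ)
    (htr : ∀ α, ∑ i, D α i = 0) (hind : LinearIndependent ℝ D)
    (r φ : ℝ) (hr : r ≠ 0) (q p : PairIdx → ℝ)
    (hq12 : q pair01 = Real.sqrt 2 * r * Real.cos (φ / 4))
    (hp12 : p pair01 = Real.sqrt 2 * r * Real.sin (φ / 4))
    (hq0 : ∀ a : PairIdx, a ≠ pair01 → q a = 0)
    (hp0 : ∀ a : PairIdx, a ≠ pair01 → p a = 0) :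
    ((∀ α : Fin 7, ∑ a : PairIdx, (D α a.1.1 + D α a.1.2) * q a * p a = 0) ↔
      (∀ α : Fin 7, (D α 0 + D α 1) * Real.sin (φ / 2) = 0)) ∧
    ((∀ α : Fin 7, (D α 0 + D α 1) * Real.sin (φ / 2) = 0) ↔ Real.sin (φ / 2) = 0) ∧
    (Real.sin (φ / 2) = 0 ↔ ∃ n : ℤ, φ = 2 * n * Real.pi) ∧
    ((∀ α : Fin 7, ∑ a : PairIdx, (D α a.1.1 + D α a.1.2) * q a * p a = 0) →
      p pair01 = 0 ∨ q pair01 = 0) :=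
  attractor_eq_I_nondyonic_general D htr hind r φ hr q p hq12 hp12 hq0
end

section
/- Let τ_A = −3·I_2 and τ_E = [[−3, 4i],[−4i, −3]] (complex 2×2 matrices). For a real number s, the matrix equation exp(i s τ_A) = exp(i s τ_E) holds if and only if s = κπ/2 for some integer κ. Hence the residual symmetry group Γ = U(1)_A ∩ U(1)_E generated by the common values is the discrete group generated by exp(−3iκπ/2)·I_2, κ ∈ ℤ. -/
/-!
Since `τ_A` is scalar and `τ_E = τ_A - 4σ₂`, we get `exp(cτ_E) = exp(cτ_A) exp(-4cσ₂)`, so the two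
exponentials agree iff `exp(-4cσ₂) = 1`. Conjugating `σ₂` to `diag(1, -1)` turns this into
`e^{±4c} = 1`, which for `c = i s` says `4s ∈ 2πℤ`.
-/

open Matrix

/-- The generator `τ_A = −3·I₂` of `U(1)_A`. -/
noncomputable def tauA : Matrix (Fin 2) (Fin 2) ℂ := (-3 : ℂ) • (1 : Matrix (Fin 2) (Fin 2) ℂ)

/-- The generator `τ_E = [[−3, 4i],[−4i, −3]]` of `U(1)_E`. -/
noncomputable def tauE : Matrix (Fin 2) (Fin 2) ℂ :=
  !![(-3 : ℂ), 4 * Complex.I; -4 * Complex.I, (-3 : ℂ)]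

open NormedSpace Complex

namespace Matrix

variable {m 𝔸 : Type*} [Fintype m] [DecidableEq m]

section NormedRing

variable [NormedRing 𝔸] [NormedAlgebra ℚ 𝔸] [CompleteSpace 𝔸]

theorem exp_diagonal_eq_one_iff (v : m → 𝔸) : exp (diagonal v) = 1 ↔ ∀ i, exp (v i) = 1 := by
  simp only [exp_diagonal, ← diagonal_one, diagonal_injective.eq_iff, funext_iff, Pi.coe_exp]

theorem exp_add_eq_exp_iff {A B : Matrix m m 𝔸} (h : Commute A B) :
    exp (A + B) = exp A ↔ exp B = 1 := by
  rw [exp_add_of_commute A B h]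
  exact (isUnit_exp A).mul_eq_left

end NormedRing

theorem exp_conj_eq_one_iff [NormedCommRing 𝔸] [NormedAlgebra ℚ 𝔸] [CompleteSpace 𝔸]
    {U : Matrix m m 𝔸} (hU : IsUnit U) (A : Matrix m m 𝔸) :
    exp (U * A * U⁻¹) = 1 ↔ exp A = 1 := by
  have hdet := (isUnit_iff_isUnit_det U).mp hU
  rw [exp_conj U A hU]
  constructor
  · intro h
    simpa [Matrix.mul_assoc, hdet] using congrArg (fun M => U⁻¹ * M * U) h
  · intro h
    simp [h, hdet]

end Matrix

noncomputable def sigma2 : Matrix (Fin 2) (Fin 2) ℂ := !![0, -I; I, 0]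

noncomputable def sigma2Eigenbasis : Matrix (Fin 2) (Fin 2) ℂ := !![1, 1; I, -I]

theorem isUnit_sigma2Eigenbasis : IsUnit sigma2Eigenbasis := by
  have hdet : sigma2Eigenbasis.det = -2 * I := by
    rw [sigma2Eigenbasis, det_fin_two_of]; ring
  rw [isUnit_iff_isUnit_det, hdet, isUnit_iff_ne_zero]
  simp

theorem sigma2_eq_conj_diagonal :
    sigma2 = sigma2Eigenbasis * diagonal ![1, -1] * sigma2Eigenbasis⁻¹ := by
  have hP := (isUnit_iff_isUnit_det _).mp isUnit_sigma2Eigenbasis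
  have : sigma2 * sigma2Eigenbasis = sigma2Eigenbasis * diagonal ![1, -1] := by
    ext i j; fin_cases i <;> fin_cases j <;> simp [sigma2, sigma2Eigenbasis]
  rw [← this, mul_nonsing_inv_cancel_right _ _ hP]

theorem exp_smul_sigma2_eq_one_iff (t : ℂ) : exp (t • sigma2) = 1 ↔ Complex.exp t = 1 := by
  rw [sigma2_eq_conj_diagonal, ← Matrix.smul_mul, ← Matrix.mul_smul, ← diagonal_smul,
    Matrix.exp_conj_eq_one_iff isUnit_sigma2Eigenbasis, Matrix.exp_diagonal_eq_one_iff,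
    Fin.forall_fin_two, ← Complex.exp_eq_exp_ℂ]
  simp [Complex.exp_neg]

theorem tauE_eq_tauA_add_smul_sigma2 : tauE = tauA + (-4 : ℂ) • sigma2 := by
  ext i j; fin_cases i <;> fin_cases j <;> simp [tauE, tauA, sigma2]

theorem exp_smul_tauA (c : ℂ) : exp (c • tauA) = Complex.exp (-3 * c) • 1 := by
  rw [tauA, smul_smul, smul_one_eq_diagonal, exp_diagonal, Pi.exp_def, ← Complex.exp_eq_exp_ℂ,
    ← smul_one_eq_diagonal, mul_comm]

theorem exp_smul_tauA_eq_exp_smul_tauE_iff (c : ℂ) :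
    exp (c • tauA) = exp (c • tauE) ↔ Complex.exp (4 * c) = 1 := by
  have hcomm : Commute (c • tauA) ((c * -4) • sigma2) := by
    rw [tauA, smul_smul]; exact (Commute.one_left _).smul_left _
  rw [eq_comm, tauE_eq_tauA_add_smul_sigma2, smul_add, smul_smul, Matrix.exp_add_eq_exp_iff hcomm,
    exp_smul_sigma2_eq_one_iff, show c * -4 = -(4 * c) by ring, Complex.exp_neg, inv_eq_one]

theorem exp_four_mul_I_mul_eq_one_iff (s : ℝ) :
    Complex.exp (4 * (I * s)) = 1 ↔ ∃ κ : ℤ, s = κ * Real.pi / 2 := by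
  rw [Complex.exp_eq_one_iff]
  refine exists_congr fun κ => ?_
  rw [← Complex.ofReal_inj]
  push_cast
  constructor <;> intro h
  · linear_combination (-I / 4) * h + (s - κ * Real.pi / 2 : ℂ) * I_sq
  · linear_combination (4 * I) * h

open NormedSpace in
/-- For a real number `s`, the matrix equation
`exp(i s τ_A) = exp(i s τ_E)` holds if and only if `s = κπ/2` for some integer `κ`.
Hence the residual symmetry group `Γ = U(1)_A ∩ U(1)_E`, generated by the common values,
is the discrete group generated by `exp(−3iκπ/2)·I₂`, `κ ∈ ℤ`. -/
theorem residual_symmetry_intersection :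
    (∀ s : ℝ,
      NormedSpace.exp ((Complex.I * (s : ℂ)) • tauA) = NormedSpace.exp ((Complex.I * (s : ℂ)) • tauE) ↔
        ∃ κ : ℤ, s = κ * Real.pi / 2) ∧
    ({M : Matrix (Fin 2) (Fin 2) ℂ | ∃ s : ℝ,
        NormedSpace.exp ((Complex.I * (s : ℂ)) • tauA) = NormedSpace.exp ((Complex.I * (s : ℂ)) • tauE) ∧
        M = NormedSpace.exp ((Complex.I * (s : ℂ)) • tauA)} =
      {M : Matrix (Fin 2) (Fin 2) ℂ | ∃ κ : ℤ,
        M = Complex.exp (-3 * Complex.I * (κ : ℂ) * Real.pi / 2) •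
              (1 : Matrix (Fin 2) (Fin 2) ℂ)}) := by
  have hcommon (s : ℝ) := (exp_smul_tauA_eq_exp_smul_tauE_iff _).trans
    (exp_four_mul_I_mul_eq_one_iff s)
  refine ⟨hcommon, ?_⟩
  ext M
  simp_rw [Set.mem_ofPred_eq, hcommon, exp_smul_tauA]
  constructor
  · rintro ⟨s, ⟨κ, rfl⟩, rfl⟩
    exact ⟨κ, by push_cast; ring_nf⟩
  · rintro ⟨κ, rfl⟩
    exact ⟨κ * Real.pi / 2, ⟨κ, rfl⟩, by push_cast; ring_nf⟩
end
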